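/- arXiv:1211.3531 — 6 statements merged into one kernel-verified Lean document; each statement's English description precedes it below -/
import Mathlib

section
/- Let X₁ and X₂ be Banach spaces, Ω a compact metric space, U an open subset of X₁, and f : Ω × U → X₂ a continuous map admitting a continuous partial Fréchet derivative ∂f/∂x : Ω × U → L(X₁;X₂) in the second variable. Then the superposition operator F : C(Ω;U) → C(Ω;X₂), (Fx)(ω) = f(ω, x(ω)), is of class C¹, and its Fréchet derivative at x ∈ C(Ω;U) is given by (F'(x)h)(ω) = (∂f/∂x)(ω, x(ω))·h(ω) for h ∈ C(Ω;X₁). -/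
noncomputable section

open Set Metric

section Aux

variable {Ω X₁ E : Type*} [MetricSpace Ω] [CompactSpace Ω]
  [NormedAddCommGroup X₁] [NormedSpace ℝ X₁]
  [NormedAddCommGroup E] [NormedSpace ℝ E]

/-- Superposition operator with a junk value when the resulting function is not continuous. -/
def supOpAux (g : Ω × X₁ → E) (x : C(Ω, X₁)) : C(Ω, E) :=
  open scoped Classical in
  if h : Continuous (fun ω => g (ω, x ω)) then ⟨_, h⟩ else 0

lemma supOpAux_apply {U : Set X₁} (g : Ω × X₁ → E) (hg : ContinuousOn g (Set.univ ×ˢ U))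
    (x : C(Ω, X₁)) (hx : ∀ ω, x ω ∈ U) (ω : Ω) : supOpAux g x ω = g (ω, x ω) := by
  have hc : Continuous fun ω => g (ω, x ω) :=
    hg.comp_continuous (continuous_id.prodMk x.continuous) (fun ω => ⟨mem_univ _, hx ω⟩)
  simp [supOpAux, hc]

/-- Evaluation against a continuous family of operators, as a continuous linear map. -/
def evalCLM (A : C(Ω, X₁ →L[ℝ] E)) : C(Ω, X₁) →L[ℝ] C(Ω, E) :=
  LinearMap.mkContinuous
    { toFun := fun h => ⟨fun ω => A ω (h ω), A.continuous.clm_apply h.continuous⟩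
      map_add' := by intro h k; ext ω; simp
      map_smul' := by intro c h; ext ω; simp }
    ‖A‖
    (by
      intro h
      refine (ContinuousMap.norm_le _ (by positivity)).2 fun ω => ?_
      calc ‖A ω (h ω)‖ ≤ ‖A ω‖ * ‖h ω‖ := (A ω).le_opNorm _
        _ ≤ ‖A‖ * ‖h‖ := mul_le_mul (A.norm_coe_le_norm ω) (h.norm_coe_le_norm ω)
            (norm_nonneg _) (norm_nonneg A))

lemma evalCLM_apply (A : C(Ω, X₁ →L[ℝ] E)) (h : C(Ω, X₁)) (ω : Ω) :
    evalCLM A h ω = A ω (h ω) := rfl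

lemma lipschitz_evalCLM :
    LipschitzWith 1 (evalCLM : C(Ω, X₁ →L[ℝ] E) → C(Ω, X₁) →L[ℝ] C(Ω, E)) := by
  refine LipschitzWith.of_dist_le_mul fun A B => ?_
  rw [NNReal.coe_one, one_mul]
  have hmain : ‖evalCLM A - evalCLM B‖ ≤ ‖A - B‖ := by
    refine ContinuousLinearMap.opNorm_le_bound _ (by positivity) fun h => ?_
    refine (ContinuousMap.norm_le _ (by positivity)).2 fun ω => ?_
    have h1 : ((evalCLM A - evalCLM B) h) ω = ((A - B) ω) (h ω) := by
      simp [evalCLM_apply]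
    rw [h1]
    calc ‖((A - B) ω) (h ω)‖ ≤ ‖(A - B) ω‖ * ‖h ω‖ := ((A - B) ω).le_opNorm _
      _ ≤ ‖A - B‖ * ‖h‖ := mul_le_mul ((A - B).norm_coe_le_norm ω) (h.norm_coe_le_norm ω)
          (norm_nonneg _) (norm_nonneg (A - B))
  calc dist (evalCLM A) (evalCLM B) = ‖evalCLM A - evalCLM B‖ := dist_eq_norm _ _
    _ ≤ ‖A - B‖ := hmain
    _ = dist A B := (dist_eq_norm A B).symm

/-- Uniform continuity near the (compact) graph of `x`. -/
lemma key_unif {U : Set X₁} (hU : IsOpen U) {g : Ω × X₁ → E}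
    (hg : ContinuousOn g (Set.univ ×ˢ U)) (x : C(Ω, X₁)) (hx : ∀ ω, x ω ∈ U)
    {δ : ℝ} (hδ : 0 < δ) :
    ∃ ρ > 0, ∀ (ω : Ω) (v : X₁), dist v (x ω) < ρ → dist (g (ω, v)) (g (ω, x ω)) < δ := by
  have hK : IsCompact (Set.range fun ω => ((ω, x ω) : Ω × X₁)) :=
    isCompact_range (continuous_id.prodMk x.continuous)
  have hopen : IsOpen ((Set.univ ×ˢ U) : Set (Ω × X₁)) := isOpen_univ.prod hU
  have hcont : ∀ a ∈ Set.range fun ω => ((ω, x ω) : Ω × X₁), ContinuousAt g a := by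
    rintro a ⟨ω, rfl⟩
    exact hg.continuousAt (hopen.mem_nhds ⟨mem_univ _, hx ω⟩)
  have h := hK.uniformContinuousAt_of_continuousAt g hcont (dist_mem_uniformity hδ)
  rw [Metric.mem_uniformity_dist] at h
  obtain ⟨ρ, hρ, H⟩ := h
  refine ⟨ρ, hρ, fun ω v hv => ?_⟩
  have hd : dist ((ω, x ω) : Ω × X₁) (ω, v) < ρ := by
    rw [Prod.dist_eq]
    refine max_lt (by simpa using hρ) ?_
    rwa [dist_comm]
  have := H hd ⟨ω, rfl⟩
  simpa [dist_comm] using this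

/-- A uniform neighborhood of the graph of `x` lies in `U`. -/
lemma key_ball {U : Set X₁} (hU : IsOpen U) (x : C(Ω, X₁)) (hx : ∀ ω, x ω ∈ U) :
    ∃ ε > 0, ∀ (ω : Ω) (v : X₁), dist v (x ω) < ε → v ∈ U := by
  have hK : IsCompact (Set.range fun ω => ((ω, x ω) : Ω × X₁)) :=
    isCompact_range (continuous_id.prodMk x.continuous)
  obtain ⟨ε, hε, hsub⟩ := hK.exists_thickening_subset_open (isOpen_univ.prod hU)
    (by rintro p ⟨ω, rfl⟩; exact ⟨mem_univ _, hx ω⟩)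
  refine ⟨ε, hε, fun ω v hv => ?_⟩
  have : ((ω, v) : Ω × X₁) ∈ Metric.thickening ε (Set.range fun ω => ((ω, x ω) : Ω × X₁)) := by
    refine Metric.mem_thickening_iff.2 ⟨(ω, x ω), ⟨ω, rfl⟩, ?_⟩
    rw [Prod.dist_eq]
    simpa using max_lt hε hv
  exact (hsub this).2

end Aux

/-- **The superposition operator is `C¹`.**
Let `X₁`, `X₂` be Banach spaces, `Ω` a compact metric space, `U ⊆ X₁` open, and let
`f : Ω × U → X₂` be continuous with a continuous partial Fréchet derivative
`f' = ∂f/∂x : Ω × U → L(X₁;X₂)` in the second variable.  Then the superposition operator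
`F : C(Ω;U) → C(Ω;X₂)`, `(F x)(ω) = f(ω, x(ω))`, is of class `C¹`, with Fréchet derivative
`(F'(x)h)(ω) = (∂f/∂x)(ω, x(ω))·h(ω)`. -/
theorem superposition_operator_C1 {Ω X₁ X₂ : Type*}
    [MetricSpace Ω] [CompactSpace Ω]
    [NormedAddCommGroup X₁] [NormedSpace ℝ X₁] [CompleteSpace X₁]
    [NormedAddCommGroup X₂] [NormedSpace ℝ X₂] [CompleteSpace X₂]
    (U : Set X₁) (hUopen : IsOpen U)
    (f : Ω × X₁ → X₂) (hf : ContinuousOn f (Set.univ ×ˢ U))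
    (f' : Ω × X₁ → X₁ →L[ℝ] X₂) (hf' : ContinuousOn f' (Set.univ ×ˢ U))
    (hder : ∀ (ω : Ω), ∀ x ∈ U, HasFDerivAt (fun v => f (ω, v)) (f' (ω, x)) x) :
    ∃ F : C(Ω, X₁) → C(Ω, X₂),
      (∀ x : C(Ω, X₁), (∀ ω, x ω ∈ U) → ∀ ω, F x ω = f (ω, x ω)) ∧
      ContDiffOn ℝ 1 F {x : C(Ω, X₁) | ∀ ω, x ω ∈ U} ∧
      ∀ x : C(Ω, X₁), (∀ ω, x ω ∈ U) →
        ∀ (h : C(Ω, X₁)) (ω : Ω), (fderiv ℝ F x h) ω = f' (ω, x ω) (h ω) := by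
  set S : Set C(Ω, X₁) := {x : C(Ω, X₁) | ∀ ω, x ω ∈ U} with hS
  -- the candidate superposition operators
  set F : C(Ω, X₁) → C(Ω, X₂) := supOpAux f with hF
  -- S is open
  have hSopen : IsOpen S := by
    rw [Metric.isOpen_iff]
    intro x hx
    obtain ⟨ε, hε, hball⟩ := key_ball hUopen x hx
    exact ⟨ε, hε, fun y hy ω =>
      hball ω (y ω) (lt_of_le_of_lt (ContinuousMap.dist_apply_le_dist ω) hy)⟩
  -- the derivative
  have hfd : ∀ x ∈ S, HasFDerivAt F (evalCLM (supOpAux f' x)) x := by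
    intro x hx
    obtain ⟨ε, hε, hball⟩ := key_ball hUopen x hx
    rw [hasFDerivAt_iff_isLittleO_nhds_zero, Asymptotics.isLittleO_iff]
    intro c hc
    obtain ⟨ρ, hρ, Hρ⟩ := key_unif hUopen hf' x hx hc
    have hr : (0 : ℝ) < min ε ρ := lt_min hε hρ
    filter_upwards [Metric.ball_mem_nhds (0 : C(Ω, X₁)) hr] with h hh
    have hnorm : ‖h‖ < min ε ρ := by rwa [mem_ball, dist_zero_right] at hh
    have hballU : ∀ (ω : Ω) (v : X₁), v ∈ Metric.ball (x ω) (min ε ρ) → v ∈ U :=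
      fun ω v hv => hball ω v (lt_of_lt_of_le hv (min_le_left _ _))
    have hxh : ∀ ω, (x + h) ω ∈ U := by
      intro ω
      refine hballU ω _ ?_
      rw [mem_ball, dist_eq_norm]
      simpa using lt_of_le_of_lt (h.norm_coe_le_norm ω) (lt_of_lt_of_le hnorm le_rfl)
    have hptw : ∀ ω, ‖f (ω, (x + h) ω) - f (ω, x ω) - f' (ω, x ω) (h ω)‖ ≤ c * ‖h‖ := by
      intro ω
      set s := Metric.ball (x ω) (min ε ρ) with hs
      have hders : ∀ v ∈ s, HasFDerivWithinAt (fun v => f (ω, v)) (f' (ω, v)) s v :=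
        fun v hv => (hder ω v (hballU ω v hv)).hasFDerivWithinAt
      have hbound : ∀ v ∈ s, ‖f' (ω, v) - f' (ω, x ω)‖ ≤ c := by
        intro v hv
        have := Hρ ω v (lt_of_lt_of_le hv (min_le_right _ _))
        rw [dist_eq_norm] at this
        exact this.le
      have hxs : x ω ∈ s := mem_ball_self hr
      have hys : x ω + h ω ∈ s := by
        rw [hs, mem_ball, dist_eq_norm]
        simpa using lt_of_le_of_lt (h.norm_coe_le_norm ω) hnorm
      have hmv := Convex.norm_image_sub_le_of_norm_hasFDerivWithin_le' hders hbound
        (convex_ball _ _) hxs hys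
      have h1 : (x ω + h ω) - x ω = h ω := by abel
      rw [h1] at hmv
      calc ‖f (ω, (x + h) ω) - f (ω, x ω) - f' (ω, x ω) (h ω)‖
          = ‖f (ω, x ω + h ω) - f (ω, x ω) - f' (ω, x ω) (h ω)‖ := by
            simp [ContinuousMap.add_apply]
        _ ≤ c * ‖h ω‖ := hmv
        _ ≤ c * ‖h‖ := mul_le_mul_of_nonneg_left (h.norm_coe_le_norm ω) hc.le
    refine (ContinuousMap.norm_le _ (by positivity)).2 fun ω => ?_
    rw [ContinuousMap.sub_apply, ContinuousMap.sub_apply, hF,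
      supOpAux_apply f hf (x + h) hxh ω, supOpAux_apply f hf x hx ω,
      evalCLM_apply, supOpAux_apply f' hf' x hx ω]
    exact hptw ω
  -- continuity of the derivative map
  have hA : ContinuousOn (supOpAux f') S := by
    intro x hx
    rw [Metric.continuousWithinAt_iff]
    intro δ hδ
    obtain ⟨ρ, hρ, Hρ⟩ := key_unif hUopen hf' x hx (half_pos hδ)
    refine ⟨ρ, hρ, fun y hyS hyx => ?_⟩
    have hled : dist (supOpAux f' y) (supOpAux f' x) ≤ δ / 2 := by
      refine (ContinuousMap.dist_le (by positivity)).2 fun ω => ?_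
      rw [supOpAux_apply f' hf' y hyS ω, supOpAux_apply f' hf' x hx ω]
      exact (Hρ ω (y ω)
        (lt_of_le_of_lt (ContinuousMap.dist_apply_le_dist ω) hyx)).le
    linarith
  have hfeq : Set.EqOn (fderiv ℝ F) (fun x => evalCLM (supOpAux f' x)) S :=
    fun x hx => (hfd x hx).fderiv
  refine ⟨F, fun x hx ω => supOpAux_apply f hf x hx ω, ?_, ?_⟩
  · -- C¹
    have h01 : (1 : WithTop ℕ∞) = 0 + 1 := (zero_add 1).symm
    rw [h01, contDiffOn_succ_iff_fderiv_of_isOpen hSopen]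
    refine ⟨fun x hx => (hfd x hx).differentiableAt.differentiableWithinAt, by simp, ?_⟩
    rw [contDiffOn_zero]
    exact ContinuousOn.congr (lipschitz_evalCLM.continuous.comp_continuousOn hA) hfeq
  · intro x hx h ω
    rw [(hfd x hx).fderiv, evalCLM_apply, supOpAux_apply f' hf' x hx ω]
end
end

section
/- Let X₁ and X₂ be Banach spaces, Ω a compact metric space, U an open subset of X₁, n ≥ 0, and f : Ω × U → X₂ a continuous map whose partial Fréchet derivatives ∂ᵏf/∂xᵏ : Ω × U → L^k(X₁;X₂) in the second variable exist and are continuous for 0 ≤ k ≤ n. Then the superposition operator F : C(Ω;U) → C(Ω;X₂), (Fx)(ω) = f(ω, x(ω)), is of class Cⁿ. -/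
/-!
On the open set of continuous maps with values in `U`, the candidate `k`-th derivative of `F` at
`x` is the pointwise `k`-linear map `(h₁, …, hₖ) ↦ (ω ↦ ∂ᵏf/∂xᵏ(ω, x ω)(h₁ ω, …, hₖ ω))`.
Since `Ω` is compact, a function `g` continuous on `Ω × U` is uniformly continuous transversally
to the graph of `x`: if `y` is uniformly close to `x`, then `g (ω, y ω)` is close to `g (ω, x ω)`
uniformly in `ω`. This gives the continuity of these coefficients in `x`, and together with the
mean value inequality in each fibre `{ω} × U` it shows that each is the Fréchet derivative of the
previous one. Hence they form a Taylor series of order `n` for `F`.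
-/

open Set Filter Topology

namespace ContinuousMap

variable {𝕜 Ω : Type*} [NontriviallyNormedField 𝕜] [TopologicalSpace Ω] [CompactSpace Ω]
  {X E : Type*} [NormedAddCommGroup X] [NormedSpace 𝕜 X] [NormedAddCommGroup E] [NormedSpace 𝕜 E]

noncomputable def applyPointwise (G : C(Ω, X →L[𝕜] E)) : C(Ω, X) →L[𝕜] C(Ω, E) :=
  LinearMap.mkContinuous
    { toFun h := ⟨fun ω => G ω (h ω), G.continuous.clm_apply h.continuous⟩
      map_add' _ _ := by ext; simp
      map_smul' _ _ := by ext; simp }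
    ‖G‖ fun h => (ContinuousMap.norm_le _ (by positivity)).2 fun ω =>
      (G ω).le_of_opNorm_le_of_le (G.norm_coe_le_norm ω) (h.norm_coe_le_norm ω)

@[simp]
theorem applyPointwise_apply (G : C(Ω, X →L[𝕜] E)) (h : C(Ω, X)) (ω : Ω) :
    applyPointwise G h ω = G ω (h ω) := rfl

variable {ι : Type*} [Fintype ι] {Y : ι → Type*} [∀ i, NormedAddCommGroup (Y i)]
  [∀ i, NormedSpace 𝕜 (Y i)]

noncomputable def multilinearPointwise :
    C(Ω, ContinuousMultilinearMap 𝕜 Y E) →L[𝕜]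
      ContinuousMultilinearMap 𝕜 (fun i => C(Ω, Y i)) C(Ω, E) :=
  LinearMap.mkContinuous
    { toFun (G : C(Ω, ContinuousMultilinearMap 𝕜 Y E)) := MultilinearMap.mkContinuous
        ({ toFun m := ⟨fun ω => G ω (fun i => m i ω),
            continuous_eval.comp (G.continuous.prodMk (continuous_pi fun i => (m i).continuous))⟩
           map_update_add' m j u v := by
             ext ω; simp [Function.apply_update (fun i (f : C(Ω, Y i)) => f ω)]
           map_update_smul' m j c u := by
             ext ω; simp [Function.apply_update (fun i (f : C(Ω, Y i)) => f ω)] } :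
          MultilinearMap 𝕜 (fun i => C(Ω, Y i)) C(Ω, E))
        ‖G‖ fun m => (ContinuousMap.norm_le _ (by positivity)).2 fun ω => by
          refine ((G ω).le_opNorm _).trans ?_
          gcongr
          · exact G.norm_coe_le_norm ω
          · exact (m _).norm_coe_le_norm ω
      map_add' _ _ := by ext; simp
      map_smul' _ _ := by ext; simp }
    1 fun G => by simpa using MultilinearMap.mkContinuous_norm_le _ (norm_nonneg G) _

@[simp]
theorem multilinearPointwise_apply (G : C(Ω, ContinuousMultilinearMap 𝕜 Y E))
    (m : ∀ i, C(Ω, Y i)) (ω : Ω) : multilinearPointwise G m ω = G ω (fun i => m i ω) := rfl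

end ContinuousMap

section Superposition

variable {Ω X E : Type*} [TopologicalSpace Ω] [PseudoMetricSpace X] [NormedAddCommGroup E]
  {U : Set X}

open Classical in
/-- The superposition operator `x ↦ (ω ↦ g (ω, x ω))`, with junk value `0` at those `x` that leave
`U` and for `g` not continuous on `univ ×ˢ U`. -/
noncomputable def superposition (U : Set X) (g : Ω × X → E) (x : C(Ω, X)) : C(Ω, E) :=
  if h : ContinuousOn g (univ ×ˢ U) ∧ ∀ ω, x ω ∈ U then
    ⟨fun ω => g (ω, x ω),
      h.1.comp_continuous (continuous_id.prodMk x.continuous) fun ω => ⟨trivial, h.2 ω⟩⟩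
  else 0

theorem superposition_apply {g : Ω × X → E} (hg : ContinuousOn g (univ ×ˢ U)) {x : C(Ω, X)}
    (hx : ∀ ω, x ω ∈ U) (ω : Ω) : superposition U g x ω = g (ω, x ω) := by
  simp [superposition, hg, hx]

variable [CompactSpace Ω]

theorem ContinuousMap.isOpen_setOf_forall_mem (hU : IsOpen U) :
    IsOpen {x : C(Ω, X) | ∀ ω, x ω ∈ U} := by
  simpa [Set.range_subset_iff] using ContinuousMap.isOpen_setOfPred_range_subset (X := Ω) hU

theorem eventually_forall_dist_lt {Y : Type*} [PseudoMetricSpace Y] {g : Ω × X → Y}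
    (hU : IsOpen U) (hg : ContinuousOn g (univ ×ˢ U)) {x : C(Ω, X)} (hx : ∀ ω, x ω ∈ U)
    {ε : ℝ} (hε : 0 < ε) :
    ∀ᶠ y in 𝓝 x, ∀ ω, dist (g (ω, y ω)) (g (ω, x ω)) < ε := by
  have hcont : ContinuousOn (fun (p : C(Ω, X) × Ω) => g (p.2, p.1 p.2))
      ({y | ∀ ω, y ω ∈ U} ×ˢ univ) :=
    hg.comp (continuous_snd.prodMk continuous_eval).continuousOn fun p hp => ⟨trivial, hp.1 p.2⟩
  obtain ⟨V, hV, hVg⟩ := isCompact_univ.mem_uniformity_of_prod (f := fun y ω => g (ω, y ω))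
    hcont (show x ∈ {y : C(Ω, X) | ∀ ω, y ω ∈ U} from hx) (Metric.dist_mem_uniformity hε)
  rw [(ContinuousMap.isOpen_setOf_forall_mem hU).nhdsWithin_eq hx] at hV
  filter_upwards [hV] with y hy ω using hVg y hy ω trivial

theorem continuousOn_superposition {g : Ω × X → E} (hU : IsOpen U)
    (hg : ContinuousOn g (univ ×ˢ U)) :
    ContinuousOn (superposition U g) {x : C(Ω, X) | ∀ ω, x ω ∈ U} := by
  refine fun x hx => (Metric.tendsto_nhds.2 fun ε hε => ?_).mono_left nhdsWithin_le_nhds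
  filter_upwards [eventually_forall_dist_lt hU hg hx (half_pos hε),
    (ContinuousMap.isOpen_setOf_forall_mem hU).mem_nhds hx] with y hyx hy
  refine (ContinuousMap.dist_le (half_pos hε).le).2 (fun ω => ?_) |>.trans_lt (half_lt_self hε)
  rw [superposition_apply hg hy, superposition_apply hg hx]
  exact (hyx ω).le

end Superposition

section Differentiability

variable {Ω X E : Type*} [TopologicalSpace Ω] [NormedAddCommGroup X] [NormedSpace ℝ X]
  [NormedAddCommGroup E] [NormedSpace ℝ E] {U : Set X}

theorem continuousOn_of_forall_hasFTaylorSeriesUpToOn {n : ℕ∞} {f : Ω × X → E}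
    {p : Ω × X → FormalMultilinearSeries ℝ X E}
    (hp : ∀ ω, HasFTaylorSeriesUpToOn n (fun v => f (ω, v)) (fun v => p (ω, v)) U)
    (hp₀ : ContinuousOn (fun q => p q 0) (univ ×ˢ U)) : ContinuousOn f (univ ×ˢ U) :=
  ((continuousMultilinearCurryFin0 ℝ X E).continuous.comp_continuousOn hp₀).congr
    fun q hq => ((hp q.1).zero_eq q.2 hq.2).symm

variable [CompactSpace Ω]

theorem hasFDerivAt_superposition {g : Ω × X → E} {g' : Ω × X → X →L[ℝ] E} (hU : IsOpen U)
    (hg : ContinuousOn g (univ ×ˢ U)) (hg' : ContinuousOn g' (univ ×ˢ U))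
    (hd : ∀ ω, ∀ v ∈ U, HasFDerivAt (fun w => g (ω, w)) (g' (ω, v)) v)
    {x : C(Ω, X)} (hx : ∀ ω, x ω ∈ U) :
    HasFDerivAt (superposition U g) (ContinuousMap.applyPointwise (superposition U g' x)) x := by
  refine hasFDerivAt_iff_isLittleO.2 (Asymptotics.isLittleO_iff.2 fun c hc => ?_)
  obtain ⟨r, hr, hball⟩ := Metric.eventually_nhds_iff_ball.1
    (((ContinuousMap.isOpen_setOf_forall_mem hU).eventually_mem hx).and
      (eventually_forall_dist_lt hU hg' hx hc))
  filter_upwards [Metric.ball_mem_nhds x hr] with y hy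
  refine (ContinuousMap.norm_le _ (by positivity)).2 fun ω => ?_
  -- the mean value inequality at `ω`, on the convex set of values at `ω` of the ball around `x`
  set s := (fun z : C(Ω, X) => z ω) '' Metric.ball x r
  have hs : Convex ℝ s := (convex_ball x r).linear_image (ContinuousMap.evalCLM ℝ ω).toLinearMap
  have hsU : ∀ v ∈ s, v ∈ U := by
    rintro _ ⟨z, hz, rfl⟩
    exact (hball z hz).1 ω
  have hmv := hs.norm_image_sub_le_of_norm_hasFDerivWithin_le'
    (f := fun w => g (ω, w)) (fun v hv => (hd ω v (hsU v hv)).hasFDerivWithinAt)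
    (φ := g' (ω, x ω)) (C := c)
    (by rintro _ ⟨z, hz, rfl⟩; rw [← dist_eq_norm]; exact ((hball z hz).2 ω).le)
    ⟨x, Metric.mem_ball_self hr, rfl⟩ ⟨y, hy, rfl⟩
  simpa [superposition_apply hg hx, superposition_apply hg ((hball y hy).1),
    superposition_apply hg' hx] using hmv.trans (by gcongr; exact (y - x).norm_coe_le_norm ω)

theorem hasFTaylorSeriesUpToOn_superposition (hU : IsOpen U) {n : ℕ∞} {f : Ω × X → E}
    {p : Ω × X → FormalMultilinearSeries ℝ X E}
    (hp : ∀ ω, HasFTaylorSeriesUpToOn n (fun v => f (ω, v)) (fun v => p (ω, v)) U)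
    (hpc : ∀ k : ℕ, k ≤ n → ContinuousOn (fun q => p q k) (univ ×ˢ U)) :
    HasFTaylorSeriesUpToOn n (superposition U f)
      (fun x k => ContinuousMap.multilinearPointwise (superposition U (fun q => p q k) x))
      {x : C(Ω, X) | ∀ ω, x ω ∈ U} := by
  have hf := continuousOn_of_forall_hasFTaylorSeriesUpToOn hp (hpc 0 (by simp))
  refine ⟨fun x hx => ?_, fun k hk x hx => ?_, fun k hk => ?_⟩
  · ext ω
    rw [ContinuousMultilinearMap.curry0_apply, ContinuousMap.multilinearPointwise_apply,
      superposition_apply (hpc 0 (by simp)) hx, superposition_apply hf hx,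
      ← (hp ω).zero_eq (x ω) (hx ω), ContinuousMultilinearMap.curry0_apply]
    exact congrArg _ (Subsingleton.elim _ _)
  · have hk' : (k : ℕ∞) < n := by exact_mod_cast hk
    have hpc' := hpc (k + 1) (Order.add_one_le_of_lt hk')
    set g' : Ω × X → X →L[ℝ] ContinuousMultilinearMap ℝ (fun _ : Fin k => X) E :=
      fun q => (p q (k + 1)).curryLeft
    have hg' : ContinuousOn g' (univ ×ˢ U) :=
      (continuousMultilinearCurryLeftEquiv ℝ _ E).continuous.comp_continuousOn hpc'
    have hd : ∀ ω, ∀ v ∈ U, HasFDerivAt (fun w => p (ω, w) k) (g' (ω, v)) v := fun ω v hv =>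
      ((hp ω).fderivWithin k hk v hv).hasFDerivAt (hU.mem_nhds hv)
    refine ((ContinuousMap.multilinearPointwise.hasFDerivAt.comp x
      (hasFDerivAt_superposition hU (hpc k hk'.le) hg' hd hx)).congr_fderiv ?_).hasFDerivWithinAt
    ext h m ω
    rw [ContinuousLinearMap.comp_apply, ContinuousMap.multilinearPointwise_apply,
      ContinuousMultilinearMap.curryLeft_apply, ContinuousMap.multilinearPointwise_apply,
      ContinuousMap.applyPointwise_apply, superposition_apply (g := g') hg' hx,
      superposition_apply (g := fun q => p q k.succ) hpc' hx,
      ContinuousMultilinearMap.curryLeft_apply]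
    exact congrArg _ (Fin.comp_cons (fun f : C(Ω, X) => f ω) h m).symm
  · exact ContinuousMap.multilinearPointwise.continuous.comp_continuousOn
      (continuousOn_superposition hU (hpc k (by exact_mod_cast hk)))

end Differentiability

theorem superposition_operator_Cn_general {Ω X₁ X₂ : Type*}
    [MetricSpace Ω] [CompactSpace Ω]
    [NormedAddCommGroup X₁] [NormedSpace ℝ X₁]
    [NormedAddCommGroup X₂] [NormedSpace ℝ X₂]
    (U : Set X₁) (hUopen : IsOpen U) (n : ℕ)
    (f : Ω × X₁ → X₂)
    (hsm : ∀ ω : Ω, ContDiffOn ℝ (n : ℕ∞) (fun v => f (ω, v)) U)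
    (hcont : ∀ k : ℕ, k ≤ n → ContinuousOn
      (fun p : Ω × X₁ => iteratedFDerivWithin ℝ k (fun v => f (p.1, v)) U p.2)
      (Set.univ ×ˢ U)) :
    ∃ F : C(Ω, X₁) → C(Ω, X₂),
      (∀ x : C(Ω, X₁), (∀ ω, x ω ∈ U) → ∀ ω, F x ω = f (ω, x ω)) ∧
      ContDiffOn ℝ (n : ℕ∞) F {x : C(Ω, X₁) | ∀ ω, x ω ∈ U} := by
  set p : Ω × X₁ → FormalMultilinearSeries ℝ X₁ X₂ :=
    fun q => ftaylorSeriesWithin ℝ (fun v => f (q.1, v)) U q.2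
  have hp : ∀ ω, HasFTaylorSeriesUpToOn (n : ℕ∞) (fun v => f (ω, v)) (fun v => p (ω, v)) U :=
    fun ω => (hsm ω).ftaylorSeriesWithin hUopen.uniqueDiffOn
  have hpc : ∀ k : ℕ, (k : ℕ∞) ≤ n → ContinuousOn (fun q => p q k) (univ ×ˢ U) :=
    fun k hk => hcont k (by exact_mod_cast hk)
  have hf := continuousOn_of_forall_hasFTaylorSeriesUpToOn hp (hpc 0 (by simp))
  exact ⟨superposition U f, fun x hx => superposition_apply hf hx,
    (hasFTaylorSeriesUpToOn_superposition hUopen hp hpc).contDiffOn⟩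

/-- **The superposition operator is `Cⁿ`.**
Let `X₁`, `X₂` be Banach spaces, `Ω` a compact metric space, `U ⊆ X₁` open, and let
`f : Ω × U → X₂` be continuous such that the partial Fréchet derivatives
`∂ᵏf/∂xᵏ : Ω × U → L^k(X₁;X₂)` in the second variable exist and are (jointly) continuous
for `0 ≤ k ≤ n`.  Then the superposition operator `F : C(Ω;U) → C(Ω;X₂)`,
`(F x)(ω) = f(ω, x(ω))`, is of class `Cⁿ`. -/
theorem superposition_operator_Cn {Ω X₁ X₂ : Type*}
    [MetricSpace Ω] [CompactSpace Ω]
    [NormedAddCommGroup X₁] [NormedSpace ℝ X₁] [CompleteSpace X₁]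
    [NormedAddCommGroup X₂] [NormedSpace ℝ X₂] [CompleteSpace X₂]
    (U : Set X₁) (hUopen : IsOpen U) (n : ℕ)
    (f : Ω × X₁ → X₂)
    (hsm : ∀ ω : Ω, ContDiffOn ℝ (n : ℕ∞) (fun v => f (ω, v)) U)
    (hcont : ∀ k : ℕ, k ≤ n → ContinuousOn
      (fun p : Ω × X₁ => iteratedFDerivWithin ℝ k (fun v => f (p.1, v)) U p.2)
      (Set.univ ×ˢ U)) :
    ∃ F : C(Ω, X₁) → C(Ω, X₂),
      (∀ x : C(Ω, X₁), (∀ ω, x ω ∈ U) → ∀ ω, F x ω = f (ω, x ω)) ∧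
      ContDiffOn ℝ (n : ℕ∞) F {x : C(Ω, X₁) | ∀ ω, x ω ∈ U} :=
  superposition_operator_Cn_general U hUopen n f hsm hcont
end

section
/- Let φ, ψ : ℝ × ℝⁿ → ℝⁿ be smooth maps such that φ(0,·) = ψ(0,·) = id and φ(t,·), ψ(t,·) are diffeomorphisms of ℝⁿ for every t, with smooth inverse families φ⁻¹, ψ⁻¹ (i.e. (t,x) ↦ φ(t,·)⁻¹(x) and (t,x) ↦ ψ(t,·)⁻¹(x) are smooth). Let m, n ≥ 1 and X, Y : ℝⁿ → ℝⁿ be such that for every x: ∂ʲ_t φ(0,x) = 0 for 1 ≤ j ≤ m−1 and ∂ᵐ_t φ(0,x) = m!·X(x), and ∂ʲ_t ψ(0,x) = 0 for 1 ≤ j ≤ n−1 and ∂ⁿ_t ψ(0,x) = n!·Y(x). Then the commutator family [φ,ψ](t,x) = ψ(t,·)⁻¹(φ(t,·)⁻¹(ψ(t, φ(t,x)))) satisfies, for every x: ∂ˡ_t [φ,ψ](0,x) = 0 for 1 ≤ l ≤ m+n−1, and ∂^{m+n}_t [φ,ψ](0,x) = (m+n)!·[X,Y](x). -/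
/-!
Write `φ_t = id + t^m X + …` and `ψ_t = id + t^n Y + …`. Taylor expansion in `t`, uniform in the
space variable, shows: if `a t - b t = t^k w + o(t^k)` near `x`, then the displacement `φ_t - id`
changes between `b t` and `a t` by `t^(m+k) DX(x) w + o(t^(m+k))`. Used once for `ψ` (with
`k = m`) and once for `φ` (with `k = n`), this gives
`ψ_t (φ_t x) = φ_t (ψ_t (x + t^(m+n) [X,Y](x))) + o(t^(m+n))`. As `(t, p) ↦ ψ_t⁻¹ (φ_t⁻¹ p)` is
`C¹`, it is Lipschitz in `p` near `(0, x)`, so the commutator is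
`x + t^(m+n) [X,Y](x) + o(t^(m+n))`, and uniqueness of Taylor expansions gives its derivatives
at `0`.
-/

open Filter Asymptotics Topology Set Function
open scoped ContDiff

variable {E G : Type*} [NormedAddCommGroup G] [NormedSpace ℝ G]

section CurveAsymptotics

lemma Asymptotics.IsLittleO.pow_smul {l : Filter ℝ} {f : ℝ → G} {k : ℕ}
    (h : f =o[l] fun t => t ^ k) (i : ℕ) :
    (fun t => t ^ i • f t) =o[l] fun t => t ^ (i + k) :=
  ((isBigO_refl (fun t : ℝ => t ^ i) l).smul_isLittleO h).congr_right fun _ => by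
    rw [smul_eq_mul, pow_add]

lemma Asymptotics.IsBigO.pow_smul {l : Filter ℝ} {f : ℝ → G} {k : ℕ}
    (h : f =O[l] fun t => t ^ k) (i : ℕ) :
    (fun t => t ^ i • f t) =O[l] fun t => t ^ (i + k) :=
  ((isBigO_refl (fun t : ℝ => t ^ i) l).smul h).congr_right fun _ => by
    rw [smul_eq_mul, pow_add]

lemma isBigO_pow_smul_const (l : Filter ℝ) (k : ℕ) (w : G) :
    (fun t : ℝ => t ^ k • w) =O[l] fun t => t ^ k :=
  isBigO_of_le' l fun t => by rw [norm_smul, mul_comm]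

lemma Asymptotics.IsLittleO.isBigO_of_sub_pow_smul {l : Filter ℝ} {f : ℝ → G} {k : ℕ} {w : G}
    (h : (fun t => f t - t ^ k • w) =o[l] fun t => t ^ k) : f =O[l] fun t => t ^ k :=
  (h.isBigO.add (isBigO_pow_smul_const l k w)).congr_left fun _ => sub_add_cancel _ _

lemma eq_zero_of_pow_smul_isLittleO {v : G} {k : ℕ}
    (h : (fun t : ℝ => t ^ k • v) =o[𝓝 0] fun t => t ^ k) : v = 0 := by
  have hv : ∀ ε > 0, ‖v‖ ≤ ε := fun ε hε => by
    obtain ⟨t, ht, ht0⟩ := ((isLittleO_iff.mp h hε).filter_mono nhdsWithin_le_nhds).and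
      self_mem_nhdsWithin |>.exists (f := 𝓝[≠] (0 : ℝ))
    rw [norm_smul, mul_comm] at ht
    exact le_of_mul_le_mul_right ht (norm_pos_iff.mpr (pow_ne_zero k ht0))
  exact norm_le_zero_iff.mp (le_of_forall_gt_imp_ge_of_dense hv)

lemma eq_zero_of_sum_pow_smul_isLittleO {e : ℕ → G} {N : ℕ}
    (h : (fun t : ℝ => ∑ i ∈ Finset.range (N + 1), t ^ i • e i) =o[𝓝 0] fun t => t ^ N) :
    ∀ i ≤ N, e i = 0 := by
  induction N with
  | zero => simpa using eq_zero_of_pow_smul_isLittleO (k := 0) (by simpa using h)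
  | succ N ih =>
    have htop : (fun t : ℝ => t ^ (N + 1) • e (N + 1)) =o[𝓝 0] fun t => t ^ N :=
      (isBigO_pow_smul_const _ _ _).trans_isLittleO (isLittleO_pow_pow (by omega))
    have hlow := ih (((h.trans_isBigO (isLittleO_pow_pow (by omega)).isBigO).sub htop).congr_left
      fun t => by rw [Finset.sum_range_succ, add_sub_cancel_right])
    have hlast := eq_zero_of_pow_smul_isLittleO (h.congr_left fun t => by
      rw [Finset.sum_range_succ, Finset.sum_eq_zero fun i hi => by
        rw [hlow i (Finset.mem_range_succ_iff.mp hi), smul_zero], zero_add])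
    intro i hi
    rcases Nat.lt_or_eq_of_le hi with hi | rfl
    exacts [hlow i (by omega), hlast]

theorem iteratedDeriv_eq_of_isLittleO_sub_pow_smul {f : ℝ → G} {N : ℕ} (hN : 1 ≤ N)
    (hf : ContDiff ℝ N f) {x B : G}
    (h : (fun t => f t - x - t ^ N • B) =o[𝓝 0] fun t => t ^ N) :
    (∀ l, 1 ≤ l → l < N → iteratedDeriv l f 0 = 0) ∧
      iteratedDeriv N f 0 = (N.factorial : ℝ) • B := by
  set e : ℕ → G := fun i => (i.factorial : ℝ)⁻¹ • iteratedDeriv i f 0 -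
    (if i = 0 then x else 0) - (if i = N then B else 0)
  have hsum : ∀ t : ℝ, ∑ i ∈ Finset.range (N + 1), t ^ i • e i =
      taylorWithinEval f N univ 0 t - x - t ^ N • B := fun t => by
    simp only [e, taylor_within_apply, iteratedDerivWithin_univ, sub_zero, smul_sub,
      Finset.sum_sub_distrib, smul_ite, smul_zero, Finset.sum_ite_eq', Finset.mem_range, smul_smul,
      mul_comm]
    simp [show 0 < N + 1 by omega]
  have htaylor : (fun t => f t - taylorWithinEval f N univ 0 t) =o[𝓝 0] fun t => t ^ N := by
    simpa using taylor_isLittleO_univ (x₀ := 0) hf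
  have he := eq_zero_of_sum_pow_smul_isLittleO ((h.sub htaylor).congr_left fun t => by
    rw [hsum]; abel)
  refine ⟨fun l hl hlN => ?_, ?_⟩
  · have hl := he l hlN.le
    simp only [e, if_neg (by omega : l ≠ 0), if_neg hlN.ne, sub_zero, smul_eq_zero, inv_eq_zero,
      Nat.cast_eq_zero, Nat.factorial_ne_zero, false_or] at hl
    exact hl
  · have hN' := he N le_rfl
    simp only [e, if_neg (by omega : N ≠ 0), if_true, sub_zero, sub_eq_zero] at hN'
    rw [← hN', smul_inv_smul₀ (by positivity)]

end CurveAsymptotics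

def HasLeadingTerm (g : ℝ → E → G) (m : ℕ) (X : E → G) : Prop :=
  ∀ y, (∀ j, 1 ≤ j → j < m → iteratedDeriv j (fun t => g t y) 0 = 0) ∧
    iteratedDeriv m (fun t => g t y) 0 = (m.factorial : ℝ) • X y

section LeadingTerm

variable {g : ℝ → E → G} {m : ℕ} {X : E → G}

lemma HasLeadingTerm.eq_inv_smul (hX : HasLeadingTerm g m X) :
    X = fun y => (m.factorial : ℝ)⁻¹ • iteratedDeriv m (fun t => g t y) 0 := by
  funext y
  rw [(hX y).2, inv_smul_smul₀ (by positivity)]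

lemma HasLeadingTerm.taylorWithinEval_eq (hX : HasLeadingTerm g m X) (hm : 1 ≤ m) {N : ℕ}
    (hmN : m ≤ N) (y : E) (t : ℝ) :
    taylorWithinEval (fun s => g s y) N univ 0 t = g 0 y + t ^ m • X y +
      ∑ i ∈ Finset.Ico (m + 1) (N + 1),
        t ^ i • ((i.factorial : ℝ)⁻¹ • iteratedDeriv i (fun s => g s y) 0) := by
  rw [taylor_within_apply, ← Finset.sum_range_add_sum_Ico _ (by omega : m + 1 ≤ N + 1),
    Finset.sum_range_succ, Finset.sum_eq_single 0]
  · simp only [iteratedDerivWithin_univ, sub_zero, (hX y).2, smul_smul]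
    congr 1
    · congr 1
      · simp
      · field_simp
    · refine Finset.sum_congr rfl fun i _ => ?_
      rw [mul_comm]
  · intro i hi hi0
    rw [iteratedDerivWithin_univ, (hX y).1 i (by omega) (Finset.mem_range.mp hi), smul_zero]
  · exact fun h => absurd (Finset.mem_range.mpr (by omega)) h

end LeadingTerm

lemma isLittleO_pow_succ_of_hasDerivAt_family [PseudoMetricSpace E] {F F' : ℝ → E → G} {x : E}
    {n : ℕ} (hF0 : ∀ y, F 0 y = 0) (hF : ∀ t y, HasDerivAt (fun s => F s y) (F' t y) t)
    (hF' : uncurry F' =o[𝓝 (0, x)] fun p => p.1 ^ n) :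
    uncurry F =o[𝓝 (0, x)] fun p => p.1 ^ (n + 1) := by
  rw [isLittleO_iff] at hF' ⊢
  intro c hc
  obtain ⟨ε, hε, hbound⟩ := Metric.eventually_nhds_iff.mp (hF' hc)
  filter_upwards [Metric.ball_mem_nhds _ hε] with ⟨t, y⟩ hp
  have hsub : ∀ s ∈ Metric.closedBall (0 : ℝ) |t|, dist (s, y) (0, x) < ε := fun s hs => by
    rw [Metric.mem_closedBall, dist_zero_right, Real.norm_eq_abs] at hs
    refine lt_of_le_of_lt ?_ hp
    simp only [Prod.dist_eq, dist_zero_right, Real.norm_eq_abs]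
    exact max_le_max_right _ hs
  have hderiv : ∀ s ∈ Metric.closedBall (0 : ℝ) |t|, ‖F' s y‖ ≤ c * |t| ^ n := fun s hs => by
    refine (hbound (hsub s hs)).trans ?_
    rw [Metric.mem_closedBall, dist_zero_right, Real.norm_eq_abs] at hs
    simp only [norm_pow, Real.norm_eq_abs]
    gcongr
  have hmvt := (convex_closedBall (0 : ℝ) |t|).norm_image_sub_le_of_norm_hasDerivWithin_le
    (fun s _ => (hF s y).hasDerivWithinAt) hderiv (Metric.mem_closedBall_self (abs_nonneg t))
    (by simp [Real.norm_eq_abs] : t ∈ Metric.closedBall (0 : ℝ) |t|)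
  simpa [hF0, pow_succ, mul_assoc] using hmvt

lemma Continuous.tendsto_uncurry_apply {α β γ : Type*} [TopologicalSpace α] [TopologicalSpace β]
    [TopologicalSpace γ] {g : α → β → γ} (hg : Continuous (uncurry g)) {t₀ : α} {x : β}
    {c : α → β} (hc : Tendsto c (𝓝 t₀) (𝓝 x)) :
    Tendsto (fun t => g t (c t)) (𝓝 t₀) (𝓝 (g t₀ x)) :=
  (hg.tendsto (t₀, x)).comp (tendsto_id.prodMk_nhds hc)

variable [NormedAddCommGroup E] [NormedSpace ℝ E]

lemma tendsto_add_pow_smul (x v : E) {k : ℕ} (hk : k ≠ 0) :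
    Tendsto (fun t : ℝ => x + t ^ k • v) (𝓝 0) (𝓝 x) := by
  have hcont : Continuous fun t : ℝ => x + t ^ k • v := by fun_prop
  simpa [zero_pow hk] using hcont.tendsto 0

lemma HasStrictFDerivAt.isBigO_sub_comp {α : Type*} {l : Filter α} {f : E → G} {f' : E →L[ℝ] G}
    {x : E} (hf : HasStrictFDerivAt f f' x) {a b : α → E} (ha : Tendsto a l (𝓝 x))
    (hb : Tendsto b l (𝓝 x)) :
    (fun t => f (a t) - f (b t)) =O[l] fun t => a t - b t :=
  hf.isBigO_sub.comp_tendsto (ha.prodMk_nhds hb)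

lemma HasStrictFDerivAt.isLittleO_sub_comp_sub_pow_smul {f : E → G} {f' : E →L[ℝ] G} {x : E}
    (hf : HasStrictFDerivAt f f' x) {a b : ℝ → E} (ha : Tendsto a (𝓝 0) (𝓝 x))
    (hb : Tendsto b (𝓝 0) (𝓝 x)) {k : ℕ} {w : E}
    (hab : (fun t => a t - b t - t ^ k • w) =o[𝓝 0] fun t => t ^ k) :
    (fun t => f (a t) - f (b t) - t ^ k • f' w) =o[𝓝 0] fun t => t ^ k := by
  have hlin : (fun t => f (a t) - f (b t) - f' (a t - b t)) =o[𝓝 0] fun t => t ^ k :=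
    (hf.isLittleO.comp_tendsto (ha.prodMk_nhds hb)).trans_isBigO hab.isBigO_of_sub_pow_smul
  refine (hlin.add ((f'.isBigO_comp _ _).trans_isLittleO hab)).congr_left fun t => ?_
  simp only [map_sub, map_smul]
  abel

lemma ContDiffAt.isBigO_uncurry_sub {g : ℝ → E → G} {x : E}
    (hg : ContDiffAt ℝ 1 (uncurry g) (0, x)) {a b : ℝ → E} (ha : Tendsto a (𝓝 0) (𝓝 x))
    (hb : Tendsto b (𝓝 0) (𝓝 x)) :
    (fun t => g t (a t) - g t (b t)) =O[𝓝 0] fun t => a t - b t :=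
  ((hg.hasStrictFDerivAt one_ne_zero).isBigO_sub_comp (tendsto_id.prodMk_nhds ha)
    (tendsto_id.prodMk_nhds hb)).trans (isBigO_of_le _ fun t => by simp)

section TimeDeriv

noncomputable def timeDeriv (g : ℝ → E → G) (t : ℝ) (y : E) : G :=
  fderiv ℝ (uncurry g) (t, y) (1, 0)

variable {g : ℝ → E → G}

lemma ContDiff.uncurry_timeDeriv (hg : ContDiff ℝ ∞ (uncurry g)) :
    ContDiff ℝ ∞ (uncurry (timeDeriv g)) :=
  (hg.fderiv_right le_rfl).clm_apply contDiff_const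

lemma ContDiff.uncurry_iterate_timeDeriv (hg : ContDiff ℝ ∞ (uncurry g)) (i : ℕ) :
    ContDiff ℝ ∞ (uncurry (timeDeriv^[i] g)) := by
  induction i generalizing g with
  | zero => exact hg
  | succ i ih => exact ih hg.uncurry_timeDeriv

lemma hasDerivAt_timeDeriv (hg : Differentiable ℝ (uncurry g)) (t : ℝ) (y : E) :
    HasDerivAt (fun s => g s y) (timeDeriv g t y) t :=
  (hg (t, y)).hasFDerivAt.comp_hasDerivAt (f := fun s => (s, y)) t
    ((hasDerivAt_id t).prodMk (hasDerivAt_const t y))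

lemma deriv_eq_timeDeriv (hg : Differentiable ℝ (uncurry g)) (y : E) :
    deriv (fun s => g s y) = fun t => timeDeriv g t y :=
  funext fun t => (hasDerivAt_timeDeriv hg t y).deriv

lemma iteratedDeriv_eq_iterate_timeDeriv (hg : ContDiff ℝ ∞ (uncurry g)) (i : ℕ) (y : E) :
    iteratedDeriv i (fun s => g s y) = fun t => timeDeriv^[i] g t y := by
  induction i generalizing g with
  | zero => rfl
  | succ i ih =>
    rw [iteratedDeriv_succ', deriv_eq_timeDeriv (hg.differentiable (by simp)),
      ih hg.uncurry_timeDeriv, iterate_succ_apply]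

lemma ContDiff.iteratedDeriv_apply_family (hg : ContDiff ℝ ∞ (uncurry g)) (i : ℕ) (t : ℝ) :
    ContDiff ℝ ∞ fun y => iteratedDeriv i (fun s => g s y) t := by
  simp_rw [iteratedDeriv_eq_iterate_timeDeriv hg]
  exact (hg.uncurry_iterate_timeDeriv i).comp (contDiff_const.prodMk contDiff_id)

end TimeDeriv

theorem taylor_isLittleO_family {g : ℝ → E → G} (hg : ContDiff ℝ ∞ (uncurry g)) (k : ℕ)
    (x : E) :
    (fun p : ℝ × E => g p.1 p.2 - taylorWithinEval (fun s => g s p.2) k univ 0 p.1)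
      =o[𝓝 (0, x)] fun p => p.1 ^ k := by
  induction k generalizing g with
  | zero =>
    simp only [taylor_within_zero_eval, pow_zero, isLittleO_one_iff]
    have hcont : Continuous fun p : ℝ × E => g p.1 p.2 - g 0 p.2 :=
      hg.continuous.sub (hg.continuous.comp (continuous_const.prodMk continuous_snd))
    simpa using hcont.tendsto (0, x)
  | succ k ih =>
    refine isLittleO_pow_succ_of_hasDerivAt_family
      (F := fun t y => g t y - taylorWithinEval (fun s => g s y) (k + 1) univ 0 t)
      (F' := fun t y => timeDeriv g t y - taylorWithinEval (fun s => timeDeriv g s y) k univ 0 t)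
      (fun y => by simp [taylorWithinEval_self]) (fun t y => ?_) (ih hg.uncurry_timeDeriv)
    have h := hasDerivAt_taylorWithinEval_succ (x₀ := 0) (x := t) (s := univ) (fun s => g s y) k
    rw [derivWithin_univ, deriv_eq_timeDeriv (hg.differentiable (by simp))] at h
    exact (hasDerivAt_timeDeriv (hg.differentiable (by simp)) t y).sub h

lemma taylor_isLittleO_family_comp {g : ℝ → E → G} (hg : ContDiff ℝ ∞ (uncurry g)) (k : ℕ)
    {x : E} {c : ℝ → E} (hc : Tendsto c (𝓝 0) (𝓝 x)) :
    (fun t => g t (c t) - taylorWithinEval (fun s => g s (c t)) k univ 0 t)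
      =o[𝓝 0] fun t => t ^ k :=
  (taylor_isLittleO_family hg k x).comp_tendsto (tendsto_id.prodMk_nhds hc)

lemma HasLeadingTerm.contDiff {g : ℝ → E → G} {m : ℕ} {X : E → G} (hX : HasLeadingTerm g m X)
    (hg : ContDiff ℝ ∞ (uncurry g)) : ContDiff ℝ ∞ X :=
  hX.eq_inv_smul ▸ (hg.iteratedDeriv_apply_family m 0).const_smul _

section Displacement

variable {g : ℝ → E → E} {m : ℕ} {X : E → E}

lemma HasLeadingTerm.isLittleO_sub_sub_pow_smul (hX : HasLeadingTerm g m X) (hm : 1 ≤ m)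
    (hg : ContDiff ℝ ∞ (uncurry g)) (hg0 : ∀ y, g 0 y = y) (x : E) :
    (fun t => g t x - x - t ^ m • X x) =o[𝓝 0] fun t => t ^ m :=
  (taylor_isLittleO_family_comp hg m (tendsto_const_nhds (x := x))).congr_left fun t => by
    simp [hX.taylorWithinEval_eq hm le_rfl, hg0, sub_sub]

theorem HasLeadingTerm.isLittleO_map_sub_map (hX : HasLeadingTerm g m X) (hm : 1 ≤ m)
    (hg : ContDiff ℝ ∞ (uncurry g)) (hg0 : ∀ y, g 0 y = y) {x : E} {a b : ℝ → E}
    (ha : Tendsto a (𝓝 0) (𝓝 x)) (hb : Tendsto b (𝓝 0) (𝓝 x)) {k : ℕ} {w : E}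
    (hab : (fun t => a t - b t - t ^ k • w) =o[𝓝 0] fun t => t ^ k) :
    (fun t => g t (a t) - g t (b t) - (a t - b t) - t ^ (m + k) • fderiv ℝ X x w)
      =o[𝓝 0] fun t => t ^ (m + k) := by
  -- Expand `g t y = y + t^m X y + ∑_{m<i≤m+k} t^i cᵢ y + o(t^(m+k))` at `y = a t` and `y = b t`;
  -- each `cᵢ` is `C¹`, so `cᵢ (a t) - cᵢ (b t) = O(t^k)`.
  have hstrict : ∀ {f : E → E}, ContDiff ℝ ∞ f → HasStrictFDerivAt f (fderiv ℝ f x) x :=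
    fun hf => hf.contDiffAt.hasStrictFDerivAt (by simp)
  have hrem := (taylor_isLittleO_family_comp hg (m + k) ha).sub
    (taylor_isLittleO_family_comp hg (m + k) hb)
  have hlead := ((hstrict (hX.contDiff hg)).isLittleO_sub_comp_sub_pow_smul ha hb hab).pow_smul m
  have htail : (fun t => ∑ i ∈ Finset.Ico (m + 1) (m + k + 1), t ^ i •
      ((i.factorial : ℝ)⁻¹ • iteratedDeriv i (fun s => g s (a t)) 0 -
        (i.factorial : ℝ)⁻¹ • iteratedDeriv i (fun s => g s (b t)) 0))
      =o[𝓝 0] fun t => t ^ (m + k) := by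
    refine IsLittleO.fun_sum fun i hi => ?_
    have hci := (hstrict ((hg.iteratedDeriv_apply_family i 0).const_smul
      (i.factorial : ℝ)⁻¹)).isBigO_sub_comp ha hb
    exact ((hci.trans hab.isBigO_of_sub_pow_smul).pow_smul i).trans_isLittleO
      (isLittleO_pow_pow (by rw [Finset.mem_Ico] at hi; omega))
  refine ((hrem.add hlead).add htail).congr_left fun t => ?_
  simp only [hX.taylorWithinEval_eq hm (Nat.le_add_right m k), hg0, smul_sub,
    Finset.sum_sub_distrib]
  rw [smul_smul, ← pow_add]
  abel

end Displacement

theorem isLittleO_comp_sub_comp_add_pow_smul_lieBracket {φ ψ : ℝ → E → E} {m n : ℕ} {X Y : E → E}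
    (hφ : ContDiff ℝ ∞ (uncurry φ)) (hψ : ContDiff ℝ ∞ (uncurry ψ))
    (hφ0 : ∀ y, φ 0 y = y) (hψ0 : ∀ y, ψ 0 y = y) (hm : 1 ≤ m) (hn : 1 ≤ n)
    (hX : HasLeadingTerm φ m X) (hY : HasLeadingTerm ψ n Y) (x : E) :
    (fun t => ψ t (φ t x) - φ t (ψ t (x + t ^ (m + n) • VectorField.lieBracket ℝ X Y x)))
      =o[𝓝 0] fun t => t ^ (m + n) := by
  set B := VectorField.lieBracket ℝ X Y x
  set γ : ℝ → E := fun t => x + t ^ (m + n) • B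
  have hγ : Tendsto γ (𝓝 0) (𝓝 x) := tendsto_add_pow_smul x B (k := m + n) (by omega)
  have hγx : ∀ k < m + n, (fun t => γ t - x) =o[𝓝 0] fun t => t ^ k := fun k hk =>
    ((isBigO_pow_smul_const _ _ B).trans_isLittleO (isLittleO_pow_pow hk)).congr_left
      fun t => by simp [γ]
  have hu : Tendsto (fun t => φ t x) (𝓝 0) (𝓝 x) := by
    simpa [hφ0] using hφ.continuous.tendsto_uncurry_apply (tendsto_const_nhds (x := x) (f := 𝓝 0))
  have hv : Tendsto (fun t => ψ t (γ t)) (𝓝 0) (𝓝 x) := by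
    simpa [hψ0] using hψ.continuous.tendsto_uncurry_apply hγ
  have hvx : (fun t => ψ t (γ t) - x - t ^ n • Y x) =o[𝓝 0] fun t => t ^ n := by
    have hγψ := hY.isLittleO_map_sub_map hn hψ hψ0 hγ tendsto_const_nhds (k := n) (w := 0)
      (by simpa using hγx n (by omega))
    refine ((hγψ.trans_isBigO (isLittleO_pow_pow (by omega)).isBigO).add
      ((hY.isLittleO_sub_sub_pow_smul hn hψ hψ0 x).add (hγx n (by omega)))).congr_left
      fun t => ?_
    simp only [map_zero, smul_zero, sub_zero]
    abel
  have hψu := hY.isLittleO_map_sub_map hn hψ hψ0 hu hγ (k := m) (w := X x)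
    (((hX.isLittleO_sub_sub_pow_smul hm hφ hφ0 x).sub (hγx m (by omega))).congr_left
      fun t => by abel)
  have hφv := hX.isLittleO_map_sub_map hm hφ hφ0 hv tendsto_const_nhds (k := n) (w := Y x) hvx
  rw [add_comm n m] at hψu
  -- `ψ_t u - φ_t v = ((ψ_t u - u) - (ψ_t γ - γ)) - ((φ_t v - v) - (φ_t x - x)) - (γ - x)`
  -- for `u = φ_t x`, `v = ψ_t γ`.
  refine (hψu.sub hφv).congr_left fun t => ?_
  simp only [B, γ, VectorField.lieBracket, smul_sub]
  abel

theorem HasLeadingTerm.commutator {φ ψ φi ψi : ℝ → E → E} {m n : ℕ} {X Y : E → E}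
    (hφ : ContDiff ℝ ∞ (uncurry φ)) (hψ : ContDiff ℝ ∞ (uncurry ψ))
    (hφi : ContDiff ℝ ∞ (uncurry φi)) (hψi : ContDiff ℝ ∞ (uncurry ψi))
    (hφ0 : ∀ y, φ 0 y = y) (hψ0 : ∀ y, ψ 0 y = y)
    (hφinv : ∀ t y, φi t (φ t y) = y) (hψinv : ∀ t y, ψi t (ψ t y) = y)
    (hm : 1 ≤ m) (hn : 1 ≤ n) (hX : HasLeadingTerm φ m X) (hY : HasLeadingTerm ψ n Y) :
    HasLeadingTerm (fun t y => ψi t (φi t (ψ t (φ t y)))) (m + n)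
      (VectorField.lieBracket ℝ X Y) := by
  intro x
  set γ : ℝ → E := fun t => x + t ^ (m + n) • VectorField.lieBracket ℝ X Y x
  have hG : ContDiff ℝ ∞ (uncurry fun t p => ψi t (φi t p)) :=
    hψi.comp (contDiff_fst.prodMk hφi)
  have hK : ContDiff ℝ ∞ fun t => ψi t (φi t (ψ t (φ t x))) :=
    hG.comp (contDiff_id.prodMk (hψ.comp (contDiff_id.prodMk
      (hφ.comp (contDiff_id.prodMk contDiff_const)))))
  have hA : Tendsto (fun t => ψ t (φ t x)) (𝓝 0) (𝓝 x) := by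
    simpa [hφ0, hψ0] using hψ.continuous.tendsto_uncurry_apply
      (hφ.continuous.tendsto_uncurry_apply (tendsto_const_nhds (x := x) (f := 𝓝 0)))
  have hA' : Tendsto (fun t => φ t (ψ t (γ t))) (𝓝 0) (𝓝 x) := by
    simpa [hφ0, hψ0] using hφ.continuous.tendsto_uncurry_apply
      (hψ.continuous.tendsto_uncurry_apply (tendsto_add_pow_smul x _ (by omega : m + n ≠ 0)))
  have hclose := ((hG.contDiffAt.of_le (by simp)).isBigO_uncurry_sub hA hA').trans_isLittleO
    (isLittleO_comp_sub_comp_add_pow_smul_lieBracket hφ hψ hφ0 hψ0 hm hn hX hY x)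
  exact iteratedDeriv_eq_of_isLittleO_sub_pow_smul (x := x) (by omega) (contDiff_infty.mp hK _)
    (hclose.congr_left fun t => by simp [γ, hφinv, hψinv, sub_sub])

/-- **The first non-vanishing derivative of a commutator of curves of diffeomorphisms is
the Lie bracket.**  Let `φ, ψ : ℝ × ℝⁿ → ℝⁿ` be smooth curves of diffeomorphisms through
the identity with smooth inverse families `φi, ψi`.  If the first non-vanishing
`t`-derivatives of `φ` and `ψ` at `0` are `m!·X` and `n!·Y` respectively, then the
commutator `[φ,ψ](t,x) = ψ_t⁻¹(φ_t⁻¹(ψ_t(φ_t(x))))` has vanishing `t`-derivatives at `0`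
of orders `1, …, m+n−1`, and its `(m+n)`-th derivative is `(m+n)!·[X,Y]`, where
`[X,Y](x) = DY(x)·X(x) − DX(x)·Y(x)`. -/
theorem commutator_of_flows_first_nonvanishing_derivative {d : ℕ}
    (φ ψ φi ψi : ℝ → (Fin d → ℝ) → (Fin d → ℝ))
    (hφ : ContDiff ℝ (⊤ : ℕ∞) fun p : ℝ × (Fin d → ℝ) => φ p.1 p.2)
    (hψ : ContDiff ℝ (⊤ : ℕ∞) fun p : ℝ × (Fin d → ℝ) => ψ p.1 p.2)
    (hφi : ContDiff ℝ (⊤ : ℕ∞) fun p : ℝ × (Fin d → ℝ) => φi p.1 p.2)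
    (hψi : ContDiff ℝ (⊤ : ℕ∞) fun p : ℝ × (Fin d → ℝ) => ψi p.1 p.2)
    (hφ0 : ∀ x, φ 0 x = x) (hψ0 : ∀ x, ψ 0 x = x)
    (hφinv : ∀ t x, φi t (φ t x) = x ∧ φ t (φi t x) = x)
    (hψinv : ∀ t x, ψi t (ψ t x) = x ∧ ψ t (ψi t x) = x)
    (m n : ℕ) (hm : 1 ≤ m) (hn : 1 ≤ n)
    (X Y : (Fin d → ℝ) → (Fin d → ℝ))
    (hX : ∀ x, (∀ j, 1 ≤ j → j < m → iteratedDeriv j (fun t => φ t x) 0 = 0) ∧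
      iteratedDeriv m (fun t => φ t x) 0 = (m.factorial : ℝ) • X x)
    (hY : ∀ x, (∀ j, 1 ≤ j → j < n → iteratedDeriv j (fun t => ψ t x) 0 = 0) ∧
      iteratedDeriv n (fun t => ψ t x) 0 = (n.factorial : ℝ) • Y x) :
    ∀ x, (∀ l, 1 ≤ l → l < m + n →
        iteratedDeriv l (fun t => ψi t (φi t (ψ t (φ t x)))) 0 = 0) ∧
      iteratedDeriv (m + n) (fun t => ψi t (φi t (ψ t (φ t x)))) 0 =
        ((m + n).factorial : ℝ) • (fderiv ℝ Y x (X x) - fderiv ℝ X x (Y x)) :=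
  HasLeadingTerm.commutator hφ hψ hφi hψi hφ0 hψ0 (fun t y => (hφinv t y).1)
    (fun t y => (hψinv t y).1) hm hn hX hY
end

section
/- Let φ : ℝ × ℝⁿ → ℝⁿ be a smooth map with φ(0,·) = id such that each φ(t,·) is a diffeomorphism of ℝⁿ, and such that the inverse family ψ, defined by ψ(t,x) = φ(t,·)⁻¹(x), is smooth. Let k ≥ 1 and X : ℝⁿ → ℝⁿ be such that for every x: ∂ʲ_t φ(0,x) = 0 for 1 ≤ j ≤ k−1 and ∂ᵏ_t φ(0,x) = k!·X(x). Then for every x: ∂ʲ_t ψ(0,x) = 0 for 1 ≤ j ≤ k−1 and ∂ᵏ_t ψ(0,x) = −k!·X(x). -/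
/-!
Write `r t y = φ t y - y`, so that `ψ t x - x = -r t (ψ t x)`. The hypotheses say
`r t x = t ^ k • X x + O(t ^ (k + 1))`, and since `r 0 = 0` the map `r t` is `O(t)`-Lipschitz
near `x`. Hence `ψ t x - x + r t x = O(t * ‖ψ t x - x‖)`, which first forces
`ψ t x - x = O(r t x) = O(t ^ k)` and then `ψ t x - x = -t ^ k • X x + O(t ^ (k + 1))`.
By Taylor's theorem, such an expansion of a smooth curve is equivalent to the claimed values
of its derivatives at `0`.
-/

open Filter Asymptotics Topology Metric

theorem isBigO_pow_succ_of_add_isBigO_mul_norm {E : Type*} [NormedAddCommGroup E]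
    {u w : ℝ → E} {k : ℕ}
    (h : (fun t => u t + w t) =O[𝓝 0] fun t => t * ‖u t‖) (hw : w =O[𝓝 0] (· ^ k)) :
    (fun t => u t + w t) =O[𝓝 0] (· ^ (k + 1)) := by
  have hsmall : (fun t => t * ‖u t‖) =o[𝓝 0] u := by
    simpa using ((isLittleO_one_iff ℝ).2 tendsto_id).mul_isBigO
      (isBigO_refl (fun t => ‖u t‖) (𝓝 (0 : ℝ)))
  have hu : u =O[𝓝 0] w := by
    simpa using (h.trans_isLittleO hsmall).right_isBigO_sub
  calc (fun t => u t + w t) =O[𝓝 0] fun t => t * ‖u t‖ := h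
    _ =O[𝓝 0] fun t => t * t ^ k := (isBigO_refl _ _).mul (hu.trans hw).norm_left
    _ = (· ^ (k + 1)) := by funext t; ring

section OrderOfVanishing

variable {E : Type*} [NormedAddCommGroup E] [NormedSpace ℝ E] {f : ℝ → E} {n : ℕ}

theorem isBigO_smul_const {α : Type*} {l : Filter α} (g : α → ℝ) (v : E) :
    (fun a => g a • v) =O[l] g := by
  simpa using (isBigO_refl g l).smul (isBigO_const_one ℝ v l)

theorem taylor_isLittleO_of_iteratedDeriv_eq_zero (hf : ContDiff ℝ n f)
    (h : ∀ j < n, iteratedDeriv j f 0 = 0) :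
    (fun t => f t - t ^ n • (n.factorial : ℝ)⁻¹ • iteratedDeriv n f 0) =o[𝓝 0]
      (· ^ n) := by
  have htaylor : ∀ t, taylorWithinEval f n Set.univ 0 t =
      t ^ n • (n.factorial : ℝ)⁻¹ • iteratedDeriv n f 0 := by
    intro t
    rw [taylor_within_apply, Finset.sum_range_succ, Finset.sum_eq_zero, zero_add]
    · simp [mul_smul, smul_comm (t ^ n)]
    · intro j hj
      simp [h j (Finset.mem_range.1 hj)]
  simpa [htaylor] using taylor_isLittleO_univ (x₀ := 0) hf

theorem isBigO_pow_of_iteratedDeriv_eq_zero (hf : ContDiff ℝ n f)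
    (h : ∀ j < n, iteratedDeriv j f 0 = 0) : f =O[𝓝 0] (· ^ n) := by
  simpa using (taylor_isLittleO_of_iteratedDeriv_eq_zero hf h).isBigO.add
    (isBigO_smul_const (· ^ n) ((n.factorial : ℝ)⁻¹ • iteratedDeriv n f 0))

theorem eq_zero_of_pow_smul_isLittleO_s13 {j : ℕ} {c : E}
    (h : (fun t : ℝ => t ^ j • c) =o[𝓝 0] (· ^ j)) : c = 0 := by
  have hc : Tendsto (fun t : ℝ => (t ^ j)⁻¹ • t ^ j • c) (𝓝[≠] 0) (𝓝 0) :=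
    (h.mono nhdsWithin_le_nhds).tendsto_inv_smul_nhds_zero
  refine tendsto_nhds_unique (tendsto_const_nhds.congr' ?_) hc
  filter_upwards [self_mem_nhdsWithin] with t ht
  rw [inv_smul_smul₀ (pow_ne_zero j ht)]

theorem iteratedDeriv_eq_zero_of_isBigO_pow (hf : ContDiff ℝ n f) (hO : f =O[𝓝 0] (· ^ n)) :
    ∀ j < n, iteratedDeriv j f 0 = 0 := by
  -- once the lower derivatives vanish, Taylor gives `f = t ^ j • f⁽ʲ⁾ 0 / j! + o(t ^ j)`,
  -- while `f = o(t ^ j)`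
  intro j
  induction j using Nat.strong_induction_on with
  | _ j ih =>
  intro hj
  have htaylor := taylor_isLittleO_of_iteratedDeriv_eq_zero
    (hf.of_le (by exact_mod_cast hj.le)) fun i hi => ih i hi (hi.trans hj)
  have hsmall : f =o[𝓝 0] (· ^ j) := hO.trans_isLittleO (isLittleO_pow_pow hj)
  have hcoeff := eq_zero_of_pow_smul_isLittleO_s13 <|
    (hsmall.sub htaylor).congr_left fun t => sub_sub_cancel _ _
  simpa [Nat.factorial_ne_zero] using hcoeff

theorem isBigO_pow_iff_iteratedDeriv_eq_zero (hf : ContDiff ℝ n f) :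
    f =O[𝓝 0] (· ^ n) ↔ ∀ j < n, iteratedDeriv j f 0 = 0 :=
  ⟨iteratedDeriv_eq_zero_of_isBigO_pow hf, isBigO_pow_of_iteratedDeriv_eq_zero hf⟩

theorem iteratedDeriv_sub_const_sub_pow_smul {k j : ℕ} {v : E} (hf : ContDiff ℝ j f)
    (hj : j ≠ 0) :
    iteratedDeriv j (fun t => f t - f 0 - t ^ k • v) 0 =
      iteratedDeriv j f 0 - (if j = k then (k.factorial : ℝ) else 0) • v := by
  have hpow : ContDiff ℝ j (fun t : ℝ => t ^ k) := by fun_prop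
  have hf0 : ContDiff ℝ j (fun t => f t - f 0) := by fun_prop
  have hpowv : ContDiff ℝ j (fun t : ℝ => t ^ k • v) := by fun_prop
  rw [iteratedDeriv_fun_sub hf0.contDiffAt hpowv.contDiffAt,
    iteratedDeriv_fun_sub hf.contDiffAt contDiff_const.contDiffAt,
    iteratedDeriv_smul_const hpow.contDiffAt, iteratedDeriv_fun_pow_zero]
  simp [iteratedDeriv_const, hj]

theorem isBigO_sub_pow_smul_iff {k : ℕ} {v : E} (hf : ContDiff ℝ (k + 1 : ℕ) f)
    (hk : k ≠ 0) :
    (fun t => f t - f 0 - t ^ k • v) =O[𝓝 0] (· ^ (k + 1)) ↔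
      (∀ j, 1 ≤ j → j < k → iteratedDeriv j f 0 = 0) ∧
        iteratedDeriv k f 0 = (k.factorial : ℝ) • v := by
  have hderiv : ∀ j ≤ k + 1, j ≠ 0 → iteratedDeriv j (fun t => f t - f 0 - t ^ k • v) 0 =
      iteratedDeriv j f 0 - (if j = k then (k.factorial : ℝ) else 0) • v := fun j hj =>
    iteratedDeriv_sub_const_sub_pow_smul (hf.of_le (by exact_mod_cast hj))
  have hg : ContDiff ℝ (k + 1 : ℕ) (fun t => f t - f 0 - t ^ k • v) := by fun_prop
  rw [isBigO_pow_iff_iteratedDeriv_eq_zero hg]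
  constructor
  · intro h
    refine ⟨fun j hj1 hjk => ?_, ?_⟩
    · simpa [hderiv j (by omega) (by omega), hjk.ne, sub_eq_zero] using h j (by omega)
    · simpa [hderiv k (by omega) hk, sub_eq_zero] using h k (by omega)
  · rintro ⟨hlow, hkth⟩ j hj
    rcases Nat.eq_zero_or_pos j with rfl | hj0
    · simp [hk]
    rw [hderiv j (by omega) hj0.ne']
    split_ifs with hjk
    · simp [hjk, hkth]
    · simp [hlow j hj0 (by omega)]

end OrderOfVanishing

section Perturbation

variable {E G : Type*} [NormedAddCommGroup E] [NormedSpace ℝ E] [NormedAddCommGroup G]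
  [NormedSpace ℝ G] {F : ℝ → E → G}

theorem exists_norm_fderiv_le_mul_abs (hF : ContDiff ℝ 2 (Function.uncurry F))
    (hF0 : ∀ y, F 0 y = 0) (x : E) :
    ∃ K ε : ℝ, 0 < ε ∧
      ∀ t y, |t| < ε → y ∈ ball x ε → ‖fderiv ℝ (F t) y‖ ≤ K * |t| := by
  set D : ℝ × E → E →L[ℝ] G := fun p => fderiv ℝ (F p.1) p.2
  have hD : ContDiff ℝ 1 D := ContDiff.fderiv (f := fun (p : ℝ × E) y => F p.1 y)
    (hF.comp (contDiff_fst.fst.prodMk contDiff_snd)) contDiff_snd (by norm_num)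
  have hD0 : ∀ y, D (0, y) = 0 := fun y => by
    simp [D, show F 0 = fun _ => 0 from funext hF0]
  obtain ⟨K, U, hU, hlip⟩ := hD.contDiffAt.exists_lipschitzOnWith (x := ((0 : ℝ), x))
  obtain ⟨ε, hε, hball⟩ := Metric.mem_nhds_iff.mp hU
  refine ⟨K, ε, hε, fun t y ht hy => ?_⟩
  have hty : ((t, y) : ℝ × E) ∈ U := hball (by simpa [Prod.dist_eq] using ⟨ht, hy⟩)
  have h0y : (((0 : ℝ), y) : ℝ × E) ∈ U := hball (by simpa [Prod.dist_eq, hε] using hy)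
  simpa [D, hD0, Prod.dist_eq] using hlip.dist_le_mul _ hty _ h0y

theorem isBigO_sub_of_apply_zero_eq_zero (hF : ContDiff ℝ 2 (Function.uncurry F))
    (hF0 : ∀ y, F 0 y = 0) {g : ℝ → E} {x : E} (hg : Tendsto g (𝓝 0) (𝓝 x)) :
    (fun t => F t (g t) - F t x) =O[𝓝 0] fun t => t * ‖g t - x‖ := by
  obtain ⟨K, ε, hε, hK⟩ := exists_norm_fderiv_le_mul_abs hF hF0 x
  have hdiff : ∀ t, Differentiable ℝ (F t) := fun t =>
    (hF.comp (contDiff_const.prodMk contDiff_id)).differentiable (by norm_num)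
  refine isBigO_iff.2 ⟨K, ?_⟩
  filter_upwards [ball_mem_nhds (0 : ℝ) hε, hg (ball_mem_nhds x hε)] with t ht hgt
  rw [norm_mul, Real.norm_eq_abs, norm_norm, ← mul_assoc]
  exact (convex_ball x ε).norm_image_sub_le_of_norm_fderiv_le (fun y _ => hdiff t y)
    (fun y hy => hK t y (by simpa using ht) hy) (mem_ball_self hε) hgt

end Perturbation

/-- **The first non-vanishing derivative of the inverse family.**
Let `φ : ℝ × ℝⁿ → ℝⁿ` be a smooth curve of diffeomorphisms through the identity whose
inverse family `ψ`, `ψ(t,x) = φ(t,·)⁻¹(x)`, is smooth.  If the `t`-derivatives of `φ` at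
`0` vanish up to order `k−1` and the `k`-th one is `k!·X`, then the `t`-derivatives of `ψ`
at `0` vanish up to order `k−1` and the `k`-th one is `−k!·X`. -/
theorem inverse_family_first_nonvanishing_derivative {d : ℕ}
    (φ ψ : ℝ → (Fin d → ℝ) → (Fin d → ℝ))
    (hφ : ContDiff ℝ (⊤ : ℕ∞) fun p : ℝ × (Fin d → ℝ) => φ p.1 p.2)
    (hψ : ContDiff ℝ (⊤ : ℕ∞) fun p : ℝ × (Fin d → ℝ) => ψ p.1 p.2)
    (hφ0 : ∀ x, φ 0 x = x)
    (hinv : ∀ t x, ψ t (φ t x) = x ∧ φ t (ψ t x) = x)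
    (k : ℕ) (hk : 1 ≤ k) (X : (Fin d → ℝ) → (Fin d → ℝ))
    (hX : ∀ x, (∀ j, 1 ≤ j → j < k → iteratedDeriv j (fun t => φ t x) 0 = 0) ∧
      iteratedDeriv k (fun t => φ t x) 0 = (k.factorial : ℝ) • X x) :
    ∀ x, (∀ j, 1 ≤ j → j < k → iteratedDeriv j (fun t => ψ t x) 0 = 0) ∧
      iteratedDeriv k (fun t => ψ t x) 0 = -((k.factorial : ℝ) • X x) := by
  intro x
  have hk0 : k ≠ 0 := by omega
  have hφx : ContDiff ℝ (k + 1 : ℕ) fun t => φ t x :=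
    contDiff_infty.1 (hφ.comp (contDiff_id.prodMk contDiff_const)) _
  have hψx : ContDiff ℝ (k + 1 : ℕ) fun t => ψ t x :=
    contDiff_infty.1 (hψ.comp (contDiff_id.prodMk contDiff_const)) _
  have hψ0 : ψ 0 x = x := by simpa [hφ0] using (hinv 0 x).2
  set r : ℝ → (Fin d → ℝ) → (Fin d → ℝ) := fun t y => φ t y - y
  have hr : (fun t => r t x - t ^ k • X x) =O[𝓝 0] (· ^ (k + 1)) := by
    simpa [r, hφ0] using (isBigO_sub_pow_smul_iff hφx hk0).2 (hX x)
  have hrx : (fun t => r t x) =O[𝓝 0] (· ^ k) :=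
    ((hr.trans (isLittleO_pow_pow k.lt_succ_self).isBigO).add
      (isBigO_smul_const (· ^ k) (X x))).congr_left fun t => sub_add_cancel _ _
  have hpert : (fun t => (ψ t x - x) + r t x) =O[𝓝 0] fun t => t * ‖ψ t x - x‖ := by
    refine (isBigO_sub_of_apply_zero_eq_zero (F := r)
      (contDiff_infty.1 (hφ.sub contDiff_snd) 2) (by simp [r, hφ0])
      (hψx.continuous.tendsto' 0 x hψ0)).neg_left.congr_left fun t => ?_
    simp only [r, (hinv t x).2]
    abel
  have hψ_expansion : (fun t => ψ t x - ψ 0 x - t ^ k • -X x) =O[𝓝 0] (· ^ (k + 1)) :=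
    ((isBigO_pow_succ_of_add_isBigO_mul_norm hpert hrx).sub hr).congr_left fun t => by
      rw [hψ0, smul_neg]
      abel
  simpa using (isBigO_sub_pow_smul_iff hψx hk0).1 hψ_expansion
end

section
/- Let c : ℝ → ℝⁿ be a smooth curve with c(0) = x and c'(0) = 0, …, c^{(k−1)}(0) = 0 for some k ≥ 1. Then for all smooth functions f, g : ℝⁿ → ℝ, the k-th derivative at 0 satisfies the Leibniz-type rule ((f·g)∘c)^{(k)}(0) = (f∘c)^{(k)}(0)·g(x) + f(x)·(g∘c)^{(k)}(0); in particular, the map f ↦ (f∘c)^{(k)}(0) is a derivation at x, so c^{(k)}(0) is a well-defined tangent vector at x. -/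
/-!
By the Leibniz rule, `((f·g)∘c)^{(k)}(0) = ∑ᵢ (k choose i) (f∘c)^{(i)}(0) (g∘c)^{(k-i)}(0)`, and
only the terms `i = 0` and `i = k` survive: by the chain rule `(f∘c)' = (Df∘c)(c')`, and the
Leibniz rule for this bilinear pairing writes `(f∘c)^{(j)}(0)`, `1 ≤ j < k`, as a combination
of terms each containing a factor `c^{(l)}(0)` with `1 ≤ l ≤ j`, all of which vanish.
-/

open Finset
open scoped ContDiff

section Leibniz

variable {𝕜 E F G : Type*} [NontriviallyNormedField 𝕜]
  [NormedAddCommGroup E] [NormedSpace 𝕜 E] [NormedAddCommGroup F] [NormedSpace 𝕜 F]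
  [NormedAddCommGroup G] [NormedSpace 𝕜 G]

theorem ContDiff.hasDerivAt_iteratedDeriv {u : 𝕜 → E} (hu : ContDiff 𝕜 ∞ u) (i : ℕ) (t : 𝕜) :
    HasDerivAt (iteratedDeriv i u) (iteratedDeriv (i + 1) u t) t := by
  rw [iteratedDeriv_succ]
  exact (hu.differentiable_iteratedDeriv i (by exact_mod_cast ENat.natCast_lt_top i) t).hasDerivAt

theorem ContinuousLinearMap.iteratedDeriv_of_bilinear (B : E →L[𝕜] F →L[𝕜] G)
    {u : 𝕜 → E} {v : 𝕜 → F} (hu : ContDiff 𝕜 ∞ u) (hv : ContDiff 𝕜 ∞ v) (n : ℕ) (t : 𝕜) :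
    iteratedDeriv n (fun s => B (u s) (v s)) t =
      ∑ i ∈ range (n + 1), n.choose i • B (iteratedDeriv i u t) (iteratedDeriv (n - i) v t) := by
  induction n generalizing t with
  | zero => simp
  | succ n ih =>
    have hterm : ∀ i ∈ range (n + 1), HasDerivAt
        (fun s => B (iteratedDeriv i u s) (iteratedDeriv (n - i) v s))
        (B (iteratedDeriv i u t) (iteratedDeriv (n + 1 - i) v t) +
          B (iteratedDeriv (i + 1) u t) (iteratedDeriv (n - i) v t)) t := by
      intro i hi
      rw [show n + 1 - i = n - i + 1 by grind]
      exact B.hasDerivAt_of_bilinear (fun _ => hu.hasDerivAt_iteratedDeriv i t)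
        (fun _ => hv.hasDerivAt_iteratedDeriv (n - i) t)
    have hsum : HasDerivAt
        (fun s => ∑ i ∈ range (n + 1),
          n.choose i • B (iteratedDeriv i u s) (iteratedDeriv (n - i) v s))
        (∑ i ∈ range (n + 1), n.choose i •
          (B (iteratedDeriv i u t) (iteratedDeriv (n + 1 - i) v t) +
            B (iteratedDeriv (i + 1) u t) (iteratedDeriv (n - i) v t))) t :=
      .fun_sum fun i hi => (hterm i hi).const_smul (n.choose i)
    rw [iteratedDeriv_succ, funext ih, hsum.deriv,
      sum_choose_succ_nsmul (fun i j => B (iteratedDeriv i u t) (iteratedDeriv j v t))]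
    simp only [smul_add, sum_add_distrib]

theorem iteratedDeriv_comp_eq_zero_of_flat {c : 𝕜 → E} {φ : E → G} (hc : ContDiff 𝕜 ∞ c)
    (hφ : ContDiff 𝕜 ∞ φ) {t : 𝕜} {k : ℕ}
    (hflat : ∀ j, 1 ≤ j → j < k → iteratedDeriv j c t = 0) {j : ℕ} (hj : 1 ≤ j) (hjk : j < k) :
    iteratedDeriv j (fun s => φ (c s)) t = 0 := by
  obtain ⟨m, rfl⟩ : ∃ m, j = m + 1 := ⟨j - 1, by omega⟩
  have hchain : deriv (fun s => φ (c s)) = fun s => fderiv 𝕜 φ (c s) (deriv c s) :=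
    funext fun s =>
      fderiv_comp_deriv s (hφ.differentiable (by simp) _) (hc.differentiable (by simp) s)
  rw [iteratedDeriv_succ', hchain]
  refine ((ContinuousLinearMap.apply 𝕜 G).flip.iteratedDeriv_of_bilinear
    ((hφ.fderiv_right (by simp)).comp hc) (contDiff_infty_iff_deriv.mp hc).2 m t).trans
    (sum_eq_zero fun i hi => ?_)
  rw [← iteratedDeriv_succ', hflat (m - i + 1) (by omega) (by grind)]
  simp

end Leibniz

theorem iteratedDeriv_mul_of_flat {𝕜 𝔸 : Type*} [NontriviallyNormedField 𝕜] [NormedRing 𝔸]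
    [NormedAlgebra 𝕜 𝔸] {u v : 𝕜 → 𝔸} {t : 𝕜} {k : ℕ} (hu : ContDiffAt 𝕜 k u t)
    (hv : ContDiffAt 𝕜 k v t) (hk : 1 ≤ k)
    (hflat : ∀ j, 1 ≤ j → j < k → iteratedDeriv j u t = 0) :
    iteratedDeriv k (fun s => u s * v s) t =
      iteratedDeriv k u t * v t + u t * iteratedDeriv k v t := by
  obtain ⟨m, rfl⟩ : ∃ m, k = m + 1 := ⟨k - 1, by omega⟩
  rw [iteratedDeriv_fun_mul hu hv, sum_range_succ, sum_eq_single_of_mem 0 (by simp)]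
  · simp [add_comm]
  · intro i hi hi0
    rw [hflat i (by omega) (by grind)]
    simp

/-- **Leibniz rule for the `k`-th derivative along a flat curve.**
Let `c : ℝ → ℝⁿ` be a smooth curve with `c(0) = x` and vanishing derivatives of orders
`1, …, k−1` at `0`.  Then for all smooth `f, g : ℝⁿ → ℝ`,
`((f·g)∘c)^{(k)}(0) = (f∘c)^{(k)}(0)·g(x) + f(x)·(g∘c)^{(k)}(0)`; in particular
`f ↦ (f∘c)^{(k)}(0)` is a derivation at `x`, so `c^{(k)}(0)` is a well-defined tangent
vector at `x`. -/
theorem kth_derivative_is_derivation {n : ℕ} (c : ℝ → Fin n → ℝ)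
    (hc : ContDiff ℝ (⊤ : ℕ∞) c) (x : Fin n → ℝ) (hc0 : c 0 = x)
    (k : ℕ) (hk : 1 ≤ k)
    (hflat : ∀ j, 1 ≤ j → j < k → iteratedDeriv j c 0 = 0)
    (f g : (Fin n → ℝ) → ℝ)
    (hf : ContDiff ℝ (⊤ : ℕ∞) f) (hg : ContDiff ℝ (⊤ : ℕ∞) g) :
    iteratedDeriv k (fun t => f (c t) * g (c t)) 0 =
      iteratedDeriv k (fun t => f (c t)) 0 * g x +
      f x * iteratedDeriv k (fun t => g (c t)) 0 := by
  subst hc0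
  have hk_le : (k : WithTop ℕ∞) ≤ ∞ := by exact_mod_cast le_top
  exact iteratedDeriv_mul_of_flat ((hf.comp hc).of_le hk_le).contDiffAt
    ((hg.comp hc).of_le hk_le).contDiffAt hk
    fun j hj hjk => iteratedDeriv_comp_eq_zero_of_flat hc hf hflat hj hjk
end

section
/- Let U ⊆ ℝⁿ be open and let X₁,…,X_k : U → ℝⁿ be smooth vector fields that are linearly independent at every point of U. Let γ : [a,b] → U be an absolutely continuous curve such that, for almost every t, its derivative γ'(t) lies in the linear span of X₁(γ(t)),…,X_k(γ(t)). Then γ is controlled by X₁,…,X_k: there exist integrable (L¹) functions u₁,…,u_k : [a,b] → ℝ with γ'(t) = Σ_{i=1}^k uᵢ(t)·Xᵢ(γ(t)) for almost every t. -/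
noncomputable section
open MeasureTheory

open Matrix in
lemma gram_isUnit_aux {k n : ℕ} {x : Fin k → Fin n → ℝ} (hx : LinearIndependent ℝ x) :
    IsUnit (Matrix.of (fun i j => x i ⬝ᵥ x j) : Matrix (Fin k) (Fin k) ℝ) := by
  set M : Matrix (Fin n) (Fin k) ℝ := (Matrix.of x)ᵀ with hM
  have hG : (Matrix.of (fun i j => x i ⬝ᵥ x j) : Matrix (Fin k) (Fin k) ℝ) = Mᵀ * M := by
    ext i j
    simp [M, Matrix.mul_apply, dotProduct]
  have h1 : Function.Injective M.mulVec := by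
    rw [Matrix.mulVec_injective_iff]
    simpa [M] using hx
  rw [← Matrix.mulVec_injective_iff_isUnit, hG]
  have hker : LinearMap.ker (Mᵀ * M).mulVecLin = ⊥ := by
    rw [Matrix.ker_mulVecLin_transpose_mul_self]
    exact LinearMap.ker_eq_bot.mpr h1
  exact LinearMap.ker_eq_bot.mp hker

open Matrix in
lemma gram_solve_aux {k n : ℕ} {x : Fin k → Fin n → ℝ} (hx : LinearIndependent ℝ x)
    {v : Fin n → ℝ} (hv : v ∈ Submodule.span ℝ (Set.range x)) :
    v = ∑ i, (((Matrix.of (fun i j => x i ⬝ᵥ x j) : Matrix (Fin k) (Fin k) ℝ)⁻¹ *ᵥ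
        (fun j => x j ⬝ᵥ v)) i) • x i := by
  set G : Matrix (Fin k) (Fin k) ℝ := Matrix.of (fun i j => x i ⬝ᵥ x j) with hG
  obtain ⟨c, hc⟩ := (Submodule.mem_span_range_iff_exists_fun ℝ).mp hv
  have hw : (fun j => x j ⬝ᵥ v) = G *ᵥ c := by
    funext j
    rw [← hc]
    simp only [G, Matrix.mulVec, dotProduct, Matrix.of_apply, Finset.sum_apply,
      Pi.smul_apply, smul_eq_mul, Finset.mul_sum, Finset.sum_mul]
    rw [Finset.sum_comm]
    exact Finset.sum_congr rfl fun i _ => Finset.sum_congr rfl fun l _ => by ring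
  rw [hw, Matrix.mulVec_mulVec,
    Matrix.nonsing_inv_mul _ ((Matrix.isUnit_iff_isUnit_det G).mp (gram_isUnit_aux hx)),
    Matrix.one_mulVec]
  exact hc.symm

/-- **Horizontal curves of a regular distribution are controlled.**
Let `X₁, …, X_k` be smooth, pointwise linearly independent vector fields on an open set
`U ⊆ ℝⁿ`, and let `γ : [a,b] → U` be absolutely continuous (i.e. `γ(t) = γ(a) + ∫ₐᵗ v`
for an integrable `v`, so that `γ' = v` a.e.) with `γ'(t)` in the span of
`X₁(γ(t)), …, X_k(γ(t))` for almost every `t`.  Then `γ` is controlled by `X₁, …, X_k`: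
there are integrable `u₁, …, u_k` with `γ'(t) = ∑ᵢ uᵢ(t)·Xᵢ(γ(t))` a.e. -/
theorem horizontal_is_controlled {n k : ℕ} (U : Set (Fin n → ℝ)) (hUopen : IsOpen U)
    (X : Fin k → (Fin n → ℝ) → (Fin n → ℝ))
    (hXsmooth : ∀ i, ContDiffOn ℝ (⊤ : ℕ∞) (X i) U)
    (hli : ∀ x ∈ U, LinearIndependent ℝ fun i => X i x)
    (a b : ℝ) (hab : a ≤ b) (γ : ℝ → Fin n → ℝ)
    (hγU : ∀ t ∈ Set.Icc a b, γ t ∈ U)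
    (v : ℝ → Fin n → ℝ) (hv : IntegrableOn v (Set.Icc a b))
    (hAC : ∀ t ∈ Set.Icc a b, γ t = γ a + ∫ s in a..t, v s)
    (hspan : ∀ᵐ t ∂(volume.restrict (Set.Icc a b)),
      v t ∈ Submodule.span ℝ (Set.range fun i => X i (γ t))) :
    ∃ u : Fin k → ℝ → ℝ, (∀ i, IntegrableOn (u i) (Set.Icc a b)) ∧
      ∀ᵐ t ∂(volume.restrict (Set.Icc a b)), v t = ∑ i, u i t • X i (γ t) := by
  classical
  set I := Set.Icc a b with hIdef
  have hγcont : ContinuousOn γ I := by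
    have h2 : ContinuousOn (fun t => ∫ s in a..t, v s) (Set.uIcc a b) :=
      intervalIntegral.continuousOn_primitive_interval (by rwa [Set.uIcc_of_le hab])
    rw [Set.uIcc_of_le hab] at h2
    exact (continuousOn_const.add h2).congr hAC
  have hXcont : ∀ i, ContinuousOn (fun t => X i (γ t)) I := fun i =>
    ((hXsmooth i).continuousOn).comp hγcont hγU
  have hXcoord : ∀ i l, ContinuousOn (fun t => X i (γ t) l) I := fun i l =>
    (continuous_apply l).comp_continuousOn (hXcont i)
  set G : ℝ → Matrix (Fin k) (Fin k) ℝ :=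
    fun t => Matrix.of (fun i j => dotProduct (X i (γ t)) (X j (γ t))) with hGdef
  have hGentry : ∀ i j, ContinuousOn (fun t => G t i j) I := fun i j => by
    simp only [hGdef, Matrix.of_apply, dotProduct]
    exact continuousOn_finset_sum _ fun l _ => (hXcoord i l).mul (hXcoord j l)
  have hGcont : Continuous (I.restrict G) :=
    continuous_matrix fun i j => continuousOn_iff_continuous_restrict.mp (hGentry i j)
  have hGunit : ∀ t ∈ I, IsUnit (G t) := fun t ht => gram_isUnit_aux (hli _ (hγU t ht))
  have hdet : ∀ t ∈ I, (G t).det ≠ 0 := fun t ht =>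
    isUnit_iff_ne_zero.mp ((Matrix.isUnit_iff_isUnit_det _).mp (hGunit t ht))
  have hdetcont : ContinuousOn (fun t => (G t).det) I :=
    continuousOn_iff_continuous_restrict.mpr hGcont.matrix_det
  have hadjcont : ∀ i j, ContinuousOn (fun t => (G t).adjugate i j) I := fun i j =>
    continuousOn_iff_continuous_restrict.mpr
      ((continuous_apply j).comp ((continuous_apply i).comp hGcont.matrix_adjugate))
  set B : ℝ → Matrix (Fin k) (Fin k) ℝ := fun t => ((G t).det)⁻¹ • (G t).adjugate with hBdef
  have hBinv : ∀ t, (G t)⁻¹ = B t := fun t => by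
    rw [Matrix.inv_def, Ring.inverse_eq_inv]
  have hBcont : ∀ i j, ContinuousOn (fun t => B t i j) I := fun i j => by
    have : (fun t => B t i j) = fun t => ((G t).det)⁻¹ * (G t).adjugate i j := rfl
    rw [this]
    exact (hdetcont.inv₀ hdet).mul (hadjcont i j)
  set w : ℝ → Fin k → ℝ := fun t j => dotProduct (X j (γ t)) (v t) with hwdef
  set u : Fin k → ℝ → ℝ := fun i t => Matrix.mulVec (B t) (w t) i with hudef
  have hvl : ∀ l, IntegrableOn (fun t => v t l) I := fun l =>
    hv.norm.mono' ((continuous_apply l).comp_aestronglyMeasurable hv.aestronglyMeasurable)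
      (Filter.Eventually.of_forall fun t => norm_le_pi_norm (v t) l)
  have key : ∀ i j l, IntegrableOn (fun t => (B t i j * X j (γ t) l) * v t l) I := by
    intro i j l
    have hcont : ContinuousOn (fun t => B t i j * X j (γ t) l) I :=
      (hBcont i j).mul (hXcoord j l)
    obtain ⟨C, hC⟩ := isCompact_Icc.exists_bound_of_continuousOn hcont
    refine ((hvl l).norm.const_mul C).mono'
      ((hcont.aestronglyMeasurable measurableSet_Icc).mul
        ((continuous_apply l).comp_aestronglyMeasurable hv.aestronglyMeasurable)) ?_
    filter_upwards [ae_restrict_mem measurableSet_Icc] with t ht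
    rw [norm_mul]
    exact mul_le_mul_of_nonneg_right (hC t ht) (norm_nonneg _)
  have hu_int : ∀ i, IntegrableOn (u i) I := by
    intro i
    have huexp : u i = fun t => ∑ j, ∑ l, (B t i j * X j (γ t) l) * v t l := by
      funext t
      simp only [hudef, hwdef, Matrix.mulVec, dotProduct, Finset.mul_sum, mul_assoc]
    rw [huexp]
    exact integrable_finset_sum _ fun j _ => integrable_finset_sum _ fun l _ => key i j l
  refine ⟨u, hu_int, ?_⟩
  filter_upwards [hspan, ae_restrict_mem measurableSet_Icc] with t hspan_t ht
  have := gram_solve_aux (hli _ (hγU t ht)) hspan_t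
  calc v t = ∑ i, ((Matrix.mulVec (G t)⁻¹ (w t)) i) • X i (γ t) := this
    _ = ∑ i, u i t • X i (γ t) := by
        simp only [hudef, hBinv t]
end
end
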